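/- arXiv:1402.5866 — 7 statements merged into one kernel-verified Lean document; each statement's English description precedes it below -/
import Mathlib

section
/- Suppose b = 1 and τ = ε + a. Then the second complex derivative of the entire function λ ↦ Δ(λ, τ) at λ = 0 equals 2 − (ε² − a²), while Δ(0, τ) = 0 and the first derivative at 0 vanishes. Consequently, λ = 0 is a zero of order exactly two of λ ↦ Δ(λ, τ) if and only if ε² − a² ≠ 2. -/
open Complex

/-- The characteristic function Δ(λ, τ) = λ² − ελ + 1 − (aλ + b)·exp(−λτ) of the
linearized van der Pol equation with delayed feedback. -/
noncomputable def charFn (ε a b τ : ℝ) (lam : ℂ) : ℂ :=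
  lam ^ 2 - (ε : ℂ) * lam + 1 - ((a : ℂ) * lam + (b : ℂ)) * Complex.exp (-lam * (τ : ℂ))

/-- `z` is a zero of order exactly `n` of `f`: the derivatives of order `< n` all vanish
at `z`, and the `n`-th derivative does not. -/
def IsZeroOfOrderExactly (f : ℂ → ℂ) (z : ℂ) (n : ℕ) : Prop :=
  (∀ k < n, iteratedDeriv k f z = 0) ∧ iteratedDeriv n f z ≠ 0

theorem isZeroOfOrderExactly_two_iff {f : ℂ → ℂ} {z : ℂ} :
    IsZeroOfOrderExactly f z 2 ↔ f z = 0 ∧ deriv f z = 0 ∧ iteratedDeriv 2 f z ≠ 0 := by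
  simp only [IsZeroOfOrderExactly, Nat.forall_lt_succ_right, Nat.lt_one_iff,
    forall_eq, iteratedDeriv_zero, iteratedDeriv_one, and_assoc]

/-- The derivative again has the shape `(p' w + q') e^{-τ w}`, so this applies twice. -/
theorem hasDerivAt_affine_mul_cexp (p q τ z : ℂ) :
    HasDerivAt (fun w => (p * w + q) * cexp (-w * τ))
      ((-τ * p * z + (p - τ * q)) * cexp (-z * τ)) z := by
  have hexp : HasDerivAt (fun w => cexp (-w * τ)) (cexp (-z * τ) * -τ) z := by
    simpa using ((hasDerivAt_id z).neg.mul_const τ).cexp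
  have haff : HasDerivAt (fun w => p * w + q) p z := by
    simpa using ((hasDerivAt_id z).const_mul p).add_const q
  have h : HasDerivAt (fun w => (p * w + q) * cexp (-w * τ)) _ z := haff.mul hexp
  convert h using 1
  ring

section CharFn

variable (ε a b τ : ℝ)

theorem charFn_zero : charFn ε a b τ 0 = 1 - b := by
  simp [charFn]

theorem deriv_charFn :
    deriv (charFn ε a b τ) =
      fun w => 2 * w - ε - (-τ * a * w + (a - τ * b)) * cexp (-w * τ) := by
  funext z
  have hquad : HasDerivAt (fun w : ℂ => w ^ 2 - ε * w + 1) (2 * z - ε) z := by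
    simpa using ((hasDerivAt_pow 2 z).sub ((hasDerivAt_id z).const_mul (ε : ℂ))).add_const 1
  exact (hquad.sub (hasDerivAt_affine_mul_cexp a b τ z)).deriv

theorem deriv_charFn_zero : deriv (charFn ε a b τ) 0 = b * τ - ε - a := by
  rw [deriv_charFn]
  simp only [mul_zero, zero_sub, neg_zero, zero_mul, Complex.exp_zero, mul_one]
  ring

theorem iteratedDeriv_two_charFn_zero :
    iteratedDeriv 2 (charFn ε a b τ) 0 = 2 + 2 * a * τ - b * τ ^ 2 := by
  have hlin : HasDerivAt (fun w : ℂ => 2 * w - ε) 2 0 := by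
    simpa using ((hasDerivAt_id (0 : ℂ)).const_mul (2 : ℂ)).sub_const (ε : ℂ)
  have h : HasDerivAt (fun w => 2 * w - ε - (-τ * a * w + (a - τ * b)) * cexp (-w * τ)) _ 0 :=
    hlin.sub (hasDerivAt_affine_mul_cexp (-τ * a) (a - τ * b) τ 0)
  rw [iteratedDeriv_succ', iteratedDeriv_one, deriv_charFn, h.deriv]
  simp only [mul_zero, zero_add, neg_zero, zero_mul, Complex.exp_zero, mul_one]
  ring

end CharFn

/-- For b = 1 and τ = ε + a, the second derivative of Δ(·, τ) at λ = 0 equals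
2 − (ε² − a²), while Δ(0, τ) = 0 and Δ'(0, τ) = 0; consequently λ = 0 is a zero of
order exactly two iff ε² − a² ≠ 2. -/
theorem double_zero_root (ε a b τ : ℝ) (hb : b = 1) (hτ : τ = ε + a) :
    iteratedDeriv 2 (charFn ε a b τ) 0 = 2 - ((ε : ℂ) ^ 2 - (a : ℂ) ^ 2) ∧
    charFn ε a b τ 0 = 0 ∧
    deriv (charFn ε a b τ) 0 = 0 ∧
    (IsZeroOfOrderExactly (charFn ε a b τ) 0 2 ↔ ε ^ 2 - a ^ 2 ≠ 2) := by
  subst hb hτ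
  have h2 : iteratedDeriv 2 (charFn ε a 1 (ε + a)) 0 = 2 - ((ε : ℂ) ^ 2 - (a : ℂ) ^ 2) := by
    rw [iteratedDeriv_two_charFn_zero]; push_cast; ring
  have h0 : charFn ε a 1 (ε + a) 0 = 0 := by
    rw [charFn_zero]; push_cast; ring
  have h1 : deriv (charFn ε a 1 (ε + a)) 0 = 0 := by
    rw [deriv_charFn_zero]; push_cast; ring
  refine ⟨h2, h0, h1, ?_⟩
  rw [isZeroOfOrderExactly_two_iff, h2, sub_ne_zero, ne_comm]
  simp only [h0, h1, true_and]
  exact_mod_cast Iff.rfl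
end

section
/- Suppose b = 1, ε > 0, a² = ε² − 2, τ = ε + a, and 6ε − 2ε³ − 2a(ε² − 2) = 0. Then the fourth complex derivative of the entire function λ ↦ Δ(λ, τ) at λ = 0 equals (ε + a)³(3a − ε) and is nonzero, while Δ(0, τ) and its first three derivatives at 0 all vanish; hence λ = 0 is a zero of order exactly four of λ ↦ Δ(λ, τ). -/
open Complex

/-!
Every function `z ↦ p z² + q z + r + (c z + d) e^{t z}` differentiates to one of the same shape,
so the derivatives of `Δ(·, τ)` at `0` are explicit polynomials in `ε, a, b, τ`. For `b = 1`,
`τ = ε + a` the value and the first derivative vanish, the second is `2 - ε² + a² = 0`, and the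
third is `(ε + a)² (ε - 2a)`, which after substituting `a² = ε² - 2` is the cubic hypothesis. As `ε + a = 0` would force `a² = ε²`, we get `ε = 2a`,
hence `3a² = 2`, and the fourth derivative `(ε + a)³ (3a - ε) = 27 a⁴ = 12` does not vanish.
-/

noncomputable def quadAddLinExp (p q r c d t : ℂ) (z : ℂ) : ℂ :=
  p * z ^ 2 + q * z + r + (c * z + d) * exp (t * z)

theorem quadAddLinExp_zero (p q r c d t : ℂ) : quadAddLinExp p q r c d t 0 = r + d := by
  simp [quadAddLinExp]

theorem hasDerivAt_quadAddLinExp (p q r c d t z : ℂ) :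
    HasDerivAt (quadAddLinExp p q r c d t)
      (quadAddLinExp 0 (2 * p) q (t * c) (c + t * d) t z) z := by
  have hexp : HasDerivAt (fun z => exp (t * z)) (exp (t * z) * t) z :=
    ((hasDerivAt_id z).const_mul t).cexp.congr_deriv (by simp)
  have hlin : HasDerivAt (fun z => c * z + d) c z :=
    ((hasDerivAt_id z).const_mul c).add_const d |>.congr_deriv (by simp)
  have hquad : HasDerivAt (fun z => p * z ^ 2 + q * z + r) (2 * p * z + q) z :=
    (((hasDerivAt_pow 2 z).const_mul p).add ((hasDerivAt_id z).const_mul q)).add_const r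
      |>.congr_deriv (by simp; ring)
  refine (hquad.fun_add (hlin.fun_mul hexp)).congr_deriv ?_
  simp only [quadAddLinExp]
  ring

theorem deriv_quadAddLinExp (p q r c d t : ℂ) :
    deriv (quadAddLinExp p q r c d t) = quadAddLinExp 0 (2 * p) q (t * c) (c + t * d) t :=
  funext fun z => (hasDerivAt_quadAddLinExp p q r c d t z).deriv

theorem charFn_eq_quadAddLinExp (ε a b τ : ℝ) :
    charFn ε a b τ = quadAddLinExp 1 (-ε) 1 (-a) (-b) (-τ) := by
  funext z
  simp only [charFn, quadAddLinExp]
  ring_nf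

theorem iteratedDeriv_charFn_zero (ε a b τ : ℝ) :
    iteratedDeriv 0 (charFn ε a b τ) 0 = 1 - b ∧
    iteratedDeriv 1 (charFn ε a b τ) 0 = τ * b - ε - a ∧
    iteratedDeriv 2 (charFn ε a b τ) 0 = 2 + 2 * a * τ - τ ^ 2 * b ∧
    iteratedDeriv 3 (charFn ε a b τ) 0 = τ ^ 3 * b - 3 * a * τ ^ 2 ∧
    iteratedDeriv 4 (charFn ε a b τ) 0 = τ ^ 3 * (4 * a - τ * b) := by
  simp only [charFn_eq_quadAddLinExp, iteratedDeriv_succ', deriv_quadAddLinExp,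
    iteratedDeriv_zero, quadAddLinExp_zero]
  refine ⟨?_, ?_, ?_, ?_, ?_⟩ <;> ring

theorem eq_two_mul_of_sq_eq_of_cubic_eq_zero {ε a : ℝ} (ha : a ^ 2 = ε ^ 2 - 2)
    (h3 : 6 * ε - 2 * ε ^ 3 - 2 * a * (ε ^ 2 - 2) = 0) : ε = 2 * a := by
  have hfactor : (ε + a) ^ 2 * (ε - 2 * a) = 0 := by
    linear_combination h3 + (-3 * ε - 2 * a) * ha
  have hsum : ε + a ≠ 0 := by
    intro h
    rw [show a = -ε by linear_combination h] at ha
    linarith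
  linarith [(mul_eq_zero.mp hfactor).resolve_left (pow_ne_zero 2 hsum)]

theorem quadruple_zero_root_general (ε a b τ : ℝ) (hb : b = 1)
    (ha : a ^ 2 = ε ^ 2 - 2) (hτ : τ = ε + a)
    (h3 : 6 * ε - 2 * ε ^ 3 - 2 * a * (ε ^ 2 - 2) = 0) :
    iteratedDeriv 4 (charFn ε a b τ) 0 = ((ε : ℂ) + a) ^ 3 * (3 * (a : ℂ) - (ε : ℂ)) ∧
    iteratedDeriv 4 (charFn ε a b τ) 0 ≠ 0 ∧
    (∀ k < 4, iteratedDeriv k (charFn ε a b τ) 0 = 0) ∧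
    IsZeroOfOrderExactly (charFn ε a b τ) 0 4 := by
  subst hb hτ
  obtain ⟨d0, d1, d2, d3, d4⟩ := iteratedDeriv_charFn_zero ε a 1 (ε + a)
  push_cast at d0 d1 d2 d3 d4
  have hε : ε = 2 * a := eq_two_mul_of_sq_eq_of_cubic_eq_zero ha h3
  have haC : (a : ℂ) ^ 2 = ε ^ 2 - 2 := by exact_mod_cast ha
  have h4 : iteratedDeriv 4 (charFn ε a 1 (ε + a)) 0 = ((ε : ℂ) + a) ^ 3 * (3 * a - ε) := by
    rw [d4]; ring
  have hne : iteratedDeriv 4 (charFn ε a 1 (ε + a)) 0 ≠ 0 := by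
    have h12 : (ε + a) ^ 3 * (3 * a - ε) = 12 := by
      subst hε
      linear_combination (-3 * (3 * a ^ 2 + 2)) * ha
    rw [h4, show ((ε : ℂ) + a) ^ 3 * (3 * a - ε) = 12 by exact_mod_cast h12]
    norm_num
  have hlow : ∀ k < 4, iteratedDeriv k (charFn ε a 1 (ε + a)) 0 = 0 := by
    intro k hk
    interval_cases k
    · rw [d0]; ring
    · rw [d1]; ring
    · rw [d2]; linear_combination haC
    · rw [d3, hε]; push_cast; ring
  exact ⟨h4, hne, hlow, hlow, hne⟩

/-- For b = 1, ε > 0, a² = ε² − 2, τ = ε + a and 6ε − 2ε³ − 2a(ε² − 2) = 0, the fourth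
derivative of Δ(·, τ) at λ = 0 equals (ε + a)³(3a − ε) and is nonzero, the value and
first three derivatives vanish at 0, and λ = 0 is a zero of order exactly four. -/
theorem quadruple_zero_root (ε a b τ : ℝ) (hb : b = 1) (hε : 0 < ε)
    (ha : a ^ 2 = ε ^ 2 - 2) (hτ : τ = ε + a)
    (h3 : 6 * ε - 2 * ε ^ 3 - 2 * a * (ε ^ 2 - 2) = 0) :
    iteratedDeriv 4 (charFn ε a b τ) 0 = ((ε : ℂ) + a) ^ 3 * (3 * (a : ℂ) - (ε : ℂ)) ∧
    iteratedDeriv 4 (charFn ε a b τ) 0 ≠ 0 ∧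
    (∀ k < 4, iteratedDeriv k (charFn ε a b τ) 0 = 0) ∧
    IsZeroOfOrderExactly (charFn ε a b τ) 0 4 :=
  quadruple_zero_root_general ε a b τ hb ha hτ h3
end

section
/- Let ε > 0 and a be real numbers with a² = ε² − 2 and 6ε − 2ε³ − 2a(ε² − 2) = 0. Then necessarily ε = √(8/3) (the value ε₀ ≈ 1.632993162) and a = ε/2 = √(2/3). In particular, the equation 6ε − 2ε³ ± 2(ε² − 2)·√(ε² − 2) = 0 has exactly one positive root. -/
lemma aux_sq (x c : ℝ) (hc : c ^ 2 = x ^ 2 - 2)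
    (h : 6 * x - 2 * x ^ 3 - 2 * c * (x ^ 2 - 2) = 0) : x ^ 2 = 8 / 3 := by
  have hc3 : c ^ 3 = 3 * x - x ^ 3 := by linear_combination c * hc - (1/2) * h
  have key : (3 * x - x ^ 3) ^ 2 = (x ^ 2 - 2) ^ 3 := by rw [← hc3, ← hc]; ring
  linear_combination (-1/3 : ℝ) * key

/-- If ε > 0, a² = ε² − 2 and 6ε − 2ε³ − 2a(ε² − 2) = 0, then ε = √(8/3) (the value
ε₀ ≈ 1.632993162) and a = ε/2 = √(2/3).  In particular, the equation
6ε − 2ε³ ± 2(ε² − 2)√(ε² − 2) = 0 has exactly one positive root. -/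
theorem unique_positive_root (ε a : ℝ) (hε : 0 < ε) (ha : a ^ 2 = ε ^ 2 - 2)
    (h : 6 * ε - 2 * ε ^ 3 - 2 * a * (ε ^ 2 - 2) = 0) :
    ε = Real.sqrt (8 / 3) ∧ a = ε / 2 ∧ a = Real.sqrt (2 / 3) ∧
    (∃! x : ℝ, 0 < x ∧
      (6 * x - 2 * x ^ 3 - 2 * (x ^ 2 - 2) * Real.sqrt (x ^ 2 - 2) = 0 ∨
       6 * x - 2 * x ^ 3 + 2 * (x ^ 2 - 2) * Real.sqrt (x ^ 2 - 2) = 0)) := by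
  have he2 : ε ^ 2 = 8 / 3 := aux_sq ε a ha h
  have ha3 : a ^ 3 = 3 * ε - ε ^ 3 := by linear_combination a * ha - (1/2) * h
  have ha3' : a ^ 3 = ε / 3 := by rw [ha3]; nlinarith [he2]
  have hapos : 0 < a := by nlinarith [sq_nonneg a, hε]
  have heq : ε = Real.sqrt (8 / 3) := by
    rw [← he2, Real.sqrt_sq hε.le]
  have ha2 : a ^ 2 = 2 / 3 := by rw [ha, he2]; norm_num
  have hae : a = ε / 2 := by nlinarith [hapos, hε]
  have has : a = Real.sqrt (2 / 3) := by rw [← ha2, Real.sqrt_sq hapos.le]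
  refine ⟨heq, hae, has, ⟨ε, ⟨hε, ?_⟩, ?_⟩⟩
  · left
    have : Real.sqrt (ε ^ 2 - 2) = a := by rw [← ha, Real.sqrt_sq hapos.le]
    rw [this]; linarith [h]
  · rintro y ⟨hy, hcase⟩
    have hy2 : y ^ 2 = 8 / 3 := by
      rcases le_or_gt (y ^ 2) 2 with h2 | h2
      · have hs0 : Real.sqrt (y ^ 2 - 2) = 0 := by
          apply Real.sqrt_eq_zero_of_nonpos; linarith
        rw [hs0] at hcase
        rcases hcase with hc | hc <;> nlinarith [hy, hc]
      · have hs2 : Real.sqrt (y ^ 2 - 2) ^ 2 = y ^ 2 - 2 :=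
          Real.sq_sqrt (by linarith)
        rcases hcase with hc | hc
        · exact aux_sq y (Real.sqrt (y ^ 2 - 2)) hs2 (by linarith)
        · refine aux_sq y (-(Real.sqrt (y ^ 2 - 2))) (by rw [neg_pow]; simpa using hs2) ?_
          linarith [hc]
    nlinarith [hy, hε, hy2, he2]
end

section
/- Suppose b = 1 and let ω > 0 and τ be real numbers such that Δ(iω, τ) = 0. Then ω² = 2 − ε² + a². In particular, a purely imaginary root iω with ω > 0 can exist only when ε² − a² < 2, and in that case ω is uniquely determined as ω₀ = √(2 − ε² + a²). -/
open Complex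

/-- For b = 1, if iω with ω > 0 is a root of the characteristic equation, then
ω² = 2 − ε² + a²; in particular ε² − a² < 2 and ω is uniquely determined as
ω₀ = √(2 − ε² + a²). -/
theorem imaginary_root_freq (ε a b τ ω : ℝ) (hb : b = 1) (hω : 0 < ω)
    (h : charFn ε a b τ (Complex.I * (ω : ℂ)) = 0) :
    ω ^ 2 = 2 - ε ^ 2 + a ^ 2 ∧ ε ^ 2 - a ^ 2 < 2 ∧ ω = Real.sqrt (2 - ε ^ 2 + a ^ 2) := by
  subst hb
  unfold charFn at h
  have h' : (Complex.I * (ω : ℂ)) ^ 2 - (ε : ℂ) * (Complex.I * ω) + 1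
      = ((a : ℂ) * (Complex.I * ω) + 1) * Complex.exp (-(Complex.I * ω) * τ) := by
    push_cast at h; linear_combination h
  have habs := congrArg Complex.normSq h'
  have hexp : Complex.normSq (Complex.exp (-(Complex.I * (ω : ℂ)) * τ)) = 1 := by
    rw [Complex.normSq_eq_norm_sq, Complex.norm_exp]
    simp
  rw [Complex.normSq_mul, hexp, mul_one] at habs
  simp [Complex.normSq_apply, mul_pow, Complex.I_sq, ← Complex.ofReal_pow] at habs
  have key : ω ^ 2 = 2 - ε ^ 2 + a ^ 2 := by nlinarith [habs, mul_pos hω hω]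
  refine ⟨key, by nlinarith [sq_nonneg ω], ?_⟩
  rw [← key]
  exact (Real.sqrt_sq hω.le).symm
end

section
/- Suppose b = 1, ε, a, ω₀, τ₀ are real with Δ(iω₀, τ₀) = 0 and exp(iω₀τ₀) ≠ 1, and set σ = iω₀/(1 − exp(iω₀τ₀)). Then the row vector (1, σ) satisfies (1, σ)·𝔸 + exp(iω₀τ₀)·(1, σ)·𝔹 = −iω₀τ₀·(1, σ); that is, ψ₁(s) = (1, σ)·exp(iω₀τ₀s) satisfies the adjoint eigenvector equation ψ₁(0)𝔸 + ψ₁(1)𝔹 = −iω₀τ₀·ψ₁(0). -/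
open Complex Matrix

/-- The coefficient matrix 𝔸 = [[0, τ₀], [−τ₀, ετ₀]] of the time-rescaled linearized
delayed van der Pol system. -/
noncomputable def Amat (ε τ₀ : ℝ) : Matrix (Fin 2) (Fin 2) ℂ :=
  !![0, (τ₀ : ℂ); -(τ₀ : ℂ), (ε : ℂ) * (τ₀ : ℂ)]

/-- The delay coefficient matrix 𝔹 = [[0, 0], [τ₀, aτ₀]] of the time-rescaled
linearized delayed van der Pol system. -/
noncomputable def Bmat (a τ₀ : ℝ) : Matrix (Fin 2) (Fin 2) ℂ :=
  !![0, 0; (τ₀ : ℂ), (a : ℂ) * (τ₀ : ℂ)]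

/-- If Δ(iω₀, τ₀) = 0 (with b = 1) and exp(iω₀τ₀) ≠ 1, then with
σ = iω₀/(1 − exp(iω₀τ₀)) the row vector (1, σ) satisfies
(1, σ)𝔸 + exp(iω₀τ₀)·(1, σ)𝔹 = −iω₀τ₀·(1, σ), i.e. ψ₁(s) = (1, σ)·exp(iω₀τ₀s)
satisfies the adjoint eigenvector equation ψ₁(0)𝔸 + ψ₁(1)𝔹 = −iω₀τ₀·ψ₁(0). -/
theorem adjoint_eigenvector_hopf (ε a ω₀ τ₀ : ℝ) (σ : ℂ)
    (h : charFn ε a 1 τ₀ (Complex.I * (ω₀ : ℂ)) = 0)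
    (hexp : Complex.exp (Complex.I * (ω₀ : ℂ) * (τ₀ : ℂ)) ≠ 1)
    (hσ : σ = Complex.I * (ω₀ : ℂ) / (1 - Complex.exp (Complex.I * (ω₀ : ℂ) * (τ₀ : ℂ)))) :
    Matrix.vecMul ![1, σ] (Amat ε τ₀)
      + Complex.exp (Complex.I * (ω₀ : ℂ) * (τ₀ : ℂ)) • Matrix.vecMul ![1, σ] (Bmat a τ₀)
      = (-(Complex.I * (ω₀ : ℂ) * (τ₀ : ℂ))) • ![1, σ] := by
  set E := Complex.exp (Complex.I * (ω₀ : ℂ) * (τ₀ : ℂ)) with hEdef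
  have hE0 : E ≠ 0 := Complex.exp_ne_zero _
  have hsub : (1 : ℂ) - E ≠ 0 := sub_ne_zero.mpr (Ne.symm hexp)
  have hE : Complex.exp (-(Complex.I * (ω₀:ℂ)) * (τ₀:ℂ)) = E⁻¹ := by
    rw [hEdef, ← Complex.exp_neg]; ring_nf
  have h1 : (Complex.I*(ω₀:ℂ))^2 - (ε:ℂ)*(Complex.I*(ω₀:ℂ)) + 1
      - ((a:ℂ)*(Complex.I*(ω₀:ℂ))+1) * E⁻¹ = 0 := by
    unfold charFn at h; rw [hE] at h; exact h
  have hconjE : (starRingEnd ℂ) E = E⁻¹ := by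
    rw [hEdef, ← Complex.exp_conj, ← Complex.exp_neg]
    congr 1
    simp [Complex.conj_ofReal]
  have h2 := congrArg (starRingEnd ℂ) h1
  simp only [map_sub, map_add, _root_.map_mul, map_pow, _root_.map_one, map_zero, Complex.conj_I,
    Complex.conj_ofReal, map_inv₀, hconjE, inv_inv] at h2
  funext i
  fin_cases i <;>
    simp [Amat, Bmat, Matrix.vecMul, dotProduct, Fin.sum_univ_two, hσ]
  · field_simp
    ring
  · field_simp
    linear_combination (τ₀:ℂ) * h2
end

section
/- Suppose b = 1, ε, a, ω₀, τ₀ are real with ω₀ > 0, τ₀ ≠ 0, Δ(iω₀, τ₀) = 0, ω₀² = 2 − ε² + a², and exp(iω₀τ₀) ≠ 1, and set σ = iω₀/(1 − exp(iω₀τ₀)). Then the bilinear pairing of ψ₁(s) = (1, σ)·exp(iω₀τ₀s) with φ₁(θ) = (1, iω₀)ᵀ·exp(iω₀τ₀θ) vanishes: (1, σ)·(1, iω₀)ᵀ + ∫₋₁⁰ (1, σ)·exp(iω₀τ₀(ξ + 1))·𝔹·(1, iω₀)ᵀ·exp(iω₀τ₀ξ) dξ = 0. -/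
open Complex Matrix

/-! With `w = iω₀`, `c = wτ₀`, `E = exp c` and `K = w² − εw + 1`, the integrand is the constant
`σ τ₀ (1 + a w) E` times `exp (2cξ)`, so the integral is `σ τ₀ (1 + a w) sinh c / c`. The
characteristic equation says `E K = a w + 1`, and after clearing `1 − E` the pairing is a multiple
of `(1 − E²) K − 2 (1 − E + w²)`. Multiplied by `K`, this is `w² (w² + 2 − ε² + a²) = 0`, and
`K ≠ 0` because `a w + 1` has real part `1`. -/

theorem charFn_eq_zero_iff {ε a b τ : ℝ} {lam : ℂ} :
    charFn ε a b τ lam = 0 ↔ a * lam + b = exp (lam * τ) * (lam ^ 2 - ε * lam + 1) := by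
  have hinv : exp (-lam * τ) * exp (lam * τ) = 1 := by
    rw [← exp_add, neg_mul, neg_add_cancel, exp_zero]
  constructor
  · intro h
    rw [charFn, sub_eq_zero] at h
    linear_combination (-exp (lam * τ)) * h - (a * lam + b) * hinv
  · intro h
    rw [charFn]
    linear_combination (-exp (-lam * τ)) * h - (lam ^ 2 - ε * lam + 1) * hinv

theorem charPoly_ne_zero_of_charFn_eq_zero {ε a b τ ω : ℝ} (hb : b ≠ 0)
    (h : charFn ε a b τ (I * ω) = 0) : (I * ω) ^ 2 - ε * (I * ω) + 1 ≠ 0 := by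
  intro hK
  rw [charFn_eq_zero_iff, hK, mul_zero] at h
  exact hb (by simpa using congrArg re h)

theorem vecMul_Bmat_dotProduct (a τ : ℝ) (σ w : ℂ) :
    vecMul ![1, σ] (Bmat a τ) ⬝ᵥ ![1, w] = σ * τ * (1 + a * w) := by
  simp only [dotProduct, vecMul, Bmat, of_apply, cons_val', cons_val_fin_one, Fin.sum_univ_two,
    cons_val_zero, cons_val_one]
  ring

theorem integral_exp_mul_const_mul_exp {c : ℂ} (hc : c ≠ 0) (z : ℂ) :
    ∫ ξ in (-1 : ℝ)..0, exp (c * (ξ + 1)) * z * exp (c * ξ) = z * sinh c / c := by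
  have hintegrand : ∀ ξ : ℝ, exp (c * (ξ + 1)) * z * exp (c * ξ) = z * exp c * exp (2 * c * ξ) := by
    intro ξ
    rw [mul_right_comm, ← exp_add, mul_assoc z, ← exp_add]
    ring_nf
  simp only [hintegrand, intervalIntegral.integral_const_mul,
    integral_exp_mul_complex (mul_ne_zero two_ne_zero hc), ofReal_zero, mul_zero, exp_zero]
  have hshift : exp c * exp (2 * c * (-1 : ℝ)) = exp (-c) := by
    rw [← exp_add]; push_cast; ring_nf
  rw [sinh, ← hshift]
  field_simp

theorem one_sub_sq_mul_charPoly_eq {ε a w E : ℂ} (hEK : a * w + 1 = E * (w ^ 2 - ε * w + 1))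
    (hK : w ^ 2 - ε * w + 1 ≠ 0) (hw : w ^ 2 + 2 - ε ^ 2 + a ^ 2 = 0) :
    (1 - E ^ 2) * (w ^ 2 - ε * w + 1) = 2 * (1 - E + w ^ 2) := by
  refine sub_eq_zero.1 ((mul_eq_zero.1 ?_).resolve_left hK)
  linear_combination (E * (w ^ 2 - ε * w + 1) + a * w - 1) * hEK + (-w ^ 2) * hw

theorem pairing_psi1_phi1_eq_zero_general (ε a ω₀ τ₀ : ℝ) (σ : ℂ)
    (h : charFn ε a 1 τ₀ (Complex.I * (ω₀ : ℂ)) = 0)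
    (hω2 : ω₀ ^ 2 = 2 - ε ^ 2 + a ^ 2)
    (hexp : Complex.exp (Complex.I * (ω₀ : ℂ) * (τ₀ : ℂ)) ≠ 1)
    (hσ : σ = Complex.I * (ω₀ : ℂ) / (1 - Complex.exp (Complex.I * (ω₀ : ℂ) * (τ₀ : ℂ)))) :
    (![1, σ] ⬝ᵥ ![1, Complex.I * (ω₀ : ℂ)])
      + (∫ ξ in (-1 : ℝ)..0,
          Complex.exp (Complex.I * (ω₀ : ℂ) * (τ₀ : ℂ) * ((ξ : ℂ) + 1))
            * (Matrix.vecMul ![1, σ] (Bmat a τ₀) ⬝ᵥ ![1, Complex.I * (ω₀ : ℂ)])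
            * Complex.exp (Complex.I * (ω₀ : ℂ) * (τ₀ : ℂ) * (ξ : ℂ))) = 0 := by
  set w : ℂ := I * ω₀ with hw
  have hc : w * τ₀ ≠ 0 := fun h0 => hexp (by rw [h0, exp_zero])
  have h1E : 1 - exp (w * τ₀) ≠ 0 := sub_ne_zero.2 (Ne.symm hexp)
  have hEK := charFn_eq_zero_iff.1 h
  push_cast at hEK
  have hw2 : w ^ 2 + 2 - ε ^ 2 + a ^ 2 = 0 := by
    have hω2' : (ω₀ : ℂ) ^ 2 = 2 - ε ^ 2 + a ^ 2 := by exact_mod_cast hω2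
    rw [hw, mul_pow, I_sq]
    linear_combination -hω2'
  have key := one_sub_sq_mul_charPoly_eq hEK (charPoly_ne_zero_of_charFn_eq_zero one_ne_zero h) hw2
  rw [integral_exp_mul_const_mul_exp hc, vecMul_Bmat_dotProduct, sinh, Complex.exp_neg, hσ]
  simp only [cons_dotProduct_cons, one_mul, dotProduct_of_isEmpty, add_zero]
  field_simp [left_ne_zero_of_mul hc, right_ne_zero_of_mul hc]
  linear_combination (exp (w * τ₀) ^ 2 - 1) * hEK - exp (w * τ₀) * key

/-- Under the Zero-Hopf conditions (b = 1, Δ(iω₀, τ₀) = 0, ω₀² = 2 − ε² + a²,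
exp(iω₀τ₀) ≠ 1) with σ = iω₀/(1 − exp(iω₀τ₀)), the bilinear pairing of
ψ₁(s) = (1, σ)·exp(iω₀τ₀s) with φ₁(θ) = (1, iω₀)ᵀ·exp(iω₀τ₀θ) vanishes. -/
theorem pairing_psi1_phi1_eq_zero (ε a ω₀ τ₀ : ℝ) (σ : ℂ)
    (hω : 0 < ω₀) (hτ : τ₀ ≠ 0)
    (h : charFn ε a 1 τ₀ (Complex.I * (ω₀ : ℂ)) = 0)
    (hω2 : ω₀ ^ 2 = 2 - ε ^ 2 + a ^ 2)
    (hexp : Complex.exp (Complex.I * (ω₀ : ℂ) * (τ₀ : ℂ)) ≠ 1)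
    (hσ : σ = Complex.I * (ω₀ : ℂ) / (1 - Complex.exp (Complex.I * (ω₀ : ℂ) * (τ₀ : ℂ)))) :
    (![1, σ] ⬝ᵥ ![1, Complex.I * (ω₀ : ℂ)])
      + (∫ ξ in (-1 : ℝ)..0,
          Complex.exp (Complex.I * (ω₀ : ℂ) * (τ₀ : ℂ) * ((ξ : ℂ) + 1))
            * (Matrix.vecMul ![1, σ] (Bmat a τ₀) ⬝ᵥ ![1, Complex.I * (ω₀ : ℂ)])
            * Complex.exp (Complex.I * (ω₀ : ℂ) * (τ₀ : ℂ) * (ξ : ℂ))) = 0 :=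
  pairing_psi1_phi1_eq_zero_general ε a ω₀ τ₀ σ h hω2 hexp hσ
end

section
/- Suppose b = 1, ε, a, ω₀, τ₀ are real with ω₀ ≠ 0, τ₀ ≠ 0 and Δ(iω₀, τ₀) = 0. Then the bilinear pairing of the constant row vector ψ₂ = (ε + a, −1) with φ₁(θ) = (1, iω₀)ᵀ·exp(iω₀τ₀θ) vanishes: (ε + a, −1)·(1, iω₀)ᵀ + ∫₋₁⁰ (ε + a, −1)·𝔹·(1, iω₀)ᵀ·exp(iω₀τ₀ξ) dξ = 0. -/
open Complex Matrix

theorem mul_integral_exp_mul_neg_one_zero (z : ℂ) :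
    z * ∫ ξ in (-1 : ℝ)..0, Complex.exp (z * ξ) = 1 - Complex.exp (-z) := by
  rcases eq_or_ne z 0 with rfl | hz
  · simp
  · rw [integral_exp_mul_complex hz, mul_div_cancel₀ _ hz]
    simp

theorem vecMul_Bmat_dotProduct_s17 (a τ₀ : ℝ) (p q x y : ℂ) :
    Matrix.vecMul ![p, q] (Bmat a τ₀) ⬝ᵥ ![x, y] = q * τ₀ * (x + a * y) := by
  simp only [dotProduct, vecMul, Bmat, of_apply, cons_val', cons_val_fin_one, Fin.sum_univ_two,
    cons_val_zero, cons_val_one, mul_zero, zero_add]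
  ring

/-- Multiplying the pairing by `iω₀` turns it into `-Δ(iω₀, τ₀)`. -/
theorem pairing_psi2_phi1_eq_zero_general (ε a ω₀ τ₀ : ℝ) (hω : ω₀ ≠ 0)
    (h : charFn ε a 1 τ₀ (Complex.I * (ω₀ : ℂ)) = 0) :
    (![(ε : ℂ) + (a : ℂ), -1] ⬝ᵥ ![1, Complex.I * (ω₀ : ℂ)])
      + (∫ ξ in (-1 : ℝ)..0,
          (Matrix.vecMul ![(ε : ℂ) + (a : ℂ), -1] (Bmat a τ₀) ⬝ᵥ ![1, Complex.I * (ω₀ : ℂ)])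
            * Complex.exp (Complex.I * (ω₀ : ℂ) * (τ₀ : ℂ) * (ξ : ℂ))) = 0 := by
  have hIω : Complex.I * (ω₀ : ℂ) ≠ 0 := mul_ne_zero I_ne_zero (ofReal_ne_zero.mpr hω)
  refine (mul_eq_zero.mp ?_).resolve_left hIω
  have hintegral := mul_integral_exp_mul_neg_one_zero (Complex.I * ω₀ * τ₀)
  rw [vecMul_Bmat_dotProduct_s17, intervalIntegral.integral_const_mul]
  simp only [charFn, neg_mul, ofReal_one, dotProduct, Fin.sum_univ_two, cons_val_zero,
    cons_val_one] at h ⊢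
  linear_combination (-1 - a * (Complex.I * ω₀)) * hintegral - h

/-- For b = 1, ω₀ ≠ 0, τ₀ ≠ 0 and Δ(iω₀, τ₀) = 0, the bilinear pairing of the constant
row vector ψ₂ = (ε + a, −1) with φ₁(θ) = (1, iω₀)ᵀ·exp(iω₀τ₀θ) vanishes. -/
theorem pairing_psi2_phi1_eq_zero (ε a ω₀ τ₀ : ℝ) (hω : ω₀ ≠ 0) (hτ : τ₀ ≠ 0)
    (h : charFn ε a 1 τ₀ (Complex.I * (ω₀ : ℂ)) = 0) :
    (![(ε : ℂ) + (a : ℂ), -1] ⬝ᵥ ![1, Complex.I * (ω₀ : ℂ)])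
      + (∫ ξ in (-1 : ℝ)..0,
          (Matrix.vecMul ![(ε : ℂ) + (a : ℂ), -1] (Bmat a τ₀) ⬝ᵥ ![1, Complex.I * (ω₀ : ℂ)])
            * Complex.exp (Complex.I * (ω₀ : ℂ) * (τ₀ : ℂ) * (ξ : ℂ))) = 0 :=
  pairing_psi2_phi1_eq_zero_general ε a ω₀ τ₀ hω h
end
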